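/- arXiv:2106.13624 — 7 statements merged into one kernel-verified Lean document; each statement's English description precedes it below -/
import Mathlib

section
/- The function g(u) = (e^u − u − 1)/u², extended continuously by g(0) = 1/2, is non-decreasing on the real line. -/
/-!
Taylor's formula with integral remainder gives `g u = ∫ t in 0..1, (1 - t) * exp (t * u)`, an
identity that also holds at `u = 0`. For `t ∈ [0, 1]` the integrand is non-decreasing in `u`.
-/

open Real intervalIntegral

theorem integral_one_sub_mul_exp_mul {u : ℝ} (hu : u ≠ 0) :
    ∫ t in (0 : ℝ)..1, (1 - t) * exp (t * u) = (exp u - u - 1) / u ^ 2 := by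
  have hantideriv : ∀ t : ℝ, HasDerivAt (fun t => ((1 - t) / u + 1 / u ^ 2) * exp (t * u))
      ((1 - t) * exp (t * u)) t := by
    intro t
    have hlin : HasDerivAt (fun t => (1 - t) / u + 1 / u ^ 2) (-1 / u) t := by
      simpa [neg_div] using (((hasDerivAt_id t).const_sub 1).div_const u).add_const (1 / u ^ 2)
    have hexp : HasDerivAt (fun t => exp (t * u)) (exp (t * u) * u) t := by
      simpa using ((hasDerivAt_id t).mul_const u).exp
    refine (hlin.mul hexp).congr_deriv ?_
    field_simp
    ring
  rw [integral_eq_sub_of_hasDerivAt (fun t _ => hantideriv t)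
    ((Continuous.intervalIntegrable (by fun_prop) _ _))]
  simp only [zero_mul, one_mul, exp_zero, sub_zero, sub_self]
  field_simp
  ring

theorem integral_one_sub_mul_exp_mul_zero :
    ∫ t in (0 : ℝ)..1, (1 - t) * exp (t * 0) = 1 / 2 := by
  simp only [mul_zero, exp_zero, mul_one]
  rw [integral_sub intervalIntegrable_const intervalIntegral.intervalIntegrable_id]
  norm_num

theorem monotone_integral_one_sub_mul_exp_mul :
    Monotone (fun u : ℝ => ∫ t in (0 : ℝ)..1, (1 - t) * exp (t * u)) := by
  intro x y hxy
  refine integral_mono_on zero_le_one (Continuous.intervalIntegrable (by fun_prop) _ _)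
    (Continuous.intervalIntegrable (by fun_prop) _ _) fun t ⟨_, ht₁⟩ => ?_
  gcongr

theorem bennett_phi_div_sq_monotone :
    Monotone (fun u : ℝ =>
      if u = 0 then (1 : ℝ) / 2 else (Real.exp u - u - 1) / u ^ 2) := by
  convert monotone_integral_one_sub_mul_exp_mul using 2 with u
  split_ifs with hu
  · rw [hu, integral_one_sub_mul_exp_mul_zero]
  · rw [integral_one_sub_mul_exp_mul hu]
end

section
/- Let b > 0 and let Z₁, …, Zₙ be i.i.d. zero-mean real random variables with finite variance satisfying Zᵢ ≤ b almost surely for all i. Let Mₙ = Σᵢ Zᵢ, Vₙ = Σᵢ E[Zᵢ²], and φ(u) = e^u − u − 1. Then for every λ > 0, E[exp(λ Mₙ − (φ(bλ)/b²) Vₙ)] ≤ 1. -/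
/-! Since `φ(u) / u²` is nondecreasing, `Z ≤ b` gives the pointwise bound
`exp (λ Z) ≤ 1 + λ Z + φ(bλ) / b² · Z²`. Taking expectations and using `E Z = 0` and
`1 + x ≤ exp x` bounds the moment generating function of each `Zᵢ` by `exp (φ(bλ) / b² · E Zᵢ²)`;
by independence the moment generating function of `Mₙ` is the product of these. -/

open MeasureTheory ProbabilityTheory

namespace Real

lemma hasSum_exp_sub_sub_one (x : ℝ) :
    HasSum (fun n : ℕ => x ^ (n + 2) / (n + 2).factorial) (exp x - x - 1) := by
  have h := (hasSum_nat_add_iff' 2).2 (exp_eq_exp_ℝ ▸ NormedSpace.expSeries_div_hasSum_exp x)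
  rwa [show ∑ i ∈ Finset.range 2, x ^ i / (i.factorial : ℝ) = x + 1 by
    simp [Finset.sum_range_succ, add_comm], ← sub_sub] at h

lemma sq_mul_exp_sub_sub_one_le_of_nonneg {u v : ℝ} (hu : 0 ≤ u) (huv : u ≤ v) :
    v ^ 2 * (exp u - u - 1) ≤ u ^ 2 * (exp v - v - 1) := by
  refine hasSum_le (fun n => ?_) ((hasSum_exp_sub_sub_one u).mul_left _)
    ((hasSum_exp_sub_sub_one v).mul_left _)
  have hpow : u ^ n ≤ v ^ n := pow_le_pow_left₀ hu huv n
  calc v ^ 2 * (u ^ (n + 2) / (n + 2).factorial)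
      = u ^ 2 * v ^ 2 * u ^ n / (n + 2).factorial := by ring
    _ ≤ u ^ 2 * v ^ 2 * v ^ n / (n + 2).factorial := by gcongr
    _ = u ^ 2 * (v ^ (n + 2) / (n + 2).factorial) := by ring

lemma exp_le_one_add_add_sq_div_two_of_nonpos {u : ℝ} (hu : u ≤ 0) :
    exp u ≤ 1 + u + u ^ 2 / 2 := by
  have hderiv (x : ℝ) : HasDerivAt (fun u => 1 + u + u ^ 2 / 2 - exp u) (1 + x - exp x) x := by
    have h : HasDerivAt (fun u => 1 + u + u ^ 2 / 2 - exp u) (1 + 2 * x ^ 1 / 2 - exp x) x :=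
      (((hasDerivAt_id' x).const_add 1).add ((hasDerivAt_pow 2 x).div_const 2)).sub
        (hasDerivAt_exp x)
    convert h using 1
    ring
  have hanti : Antitone (fun u => 1 + u + u ^ 2 / 2 - exp u) :=
    antitone_of_deriv_nonpos (fun x => (hderiv x).differentiableAt) fun x => by
      rw [(hderiv x).deriv]
      linarith [add_one_le_exp x]
  have := hanti hu
  simp only [exp_zero] at this
  linarith

-- `(exp u - u - 1) / u ^ 2` is nondecreasing.
lemma sq_mul_exp_sub_sub_one_le {u v : ℝ} (huv : u ≤ v) (hv : 0 ≤ v) :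
    v ^ 2 * (exp u - u - 1) ≤ u ^ 2 * (exp v - v - 1) := by
  rcases le_total 0 u with hu | hu
  · exact sq_mul_exp_sub_sub_one_le_of_nonneg hu huv
  · have hneg := exp_le_one_add_add_sq_div_two_of_nonpos hu
    have hpos := quadratic_le_exp_of_nonneg hv
    calc v ^ 2 * (exp u - u - 1) ≤ v ^ 2 * (u ^ 2 / 2) := by gcongr; linarith
      _ = u ^ 2 * (v ^ 2 / 2) := by ring
      _ ≤ u ^ 2 * (exp v - v - 1) := by gcongr; linarith

lemma exp_mul_le_one_add_add_sq {b l z : ℝ} (hb : 0 < b) (hl : 0 < l) (hz : z ≤ b) :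
    exp (l * z) ≤ 1 + l * z + (exp (b * l) - b * l - 1) / b ^ 2 * z ^ 2 := by
  have hlz : l * z ≤ b * l := (mul_le_mul_of_nonneg_left hz hl.le).trans_eq (mul_comm l b)
  have h := sq_mul_exp_sub_sub_one_le hlz (mul_pos hb hl).le
  have hbl : 0 < (b * l) ^ 2 := by positivity
  have : exp (l * z) - l * z - 1 ≤ (exp (b * l) - b * l - 1) / b ^ 2 * z ^ 2 := by
    rw [div_mul_eq_mul_div, le_div_iff₀ (by positivity)]
    nlinarith
  linarith

end Real

section

variable {Ω : Type*} [MeasurableSpace Ω] {P : Measure Ω}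

lemma mgf_le_exp_mul_integral_sq [IsProbabilityMeasure P] {X : Ω → ℝ} {b l : ℝ}
    (hb : 0 < b) (hl : 0 < l) (hX : AEMeasurable X P) (hmean : ∫ ω, X ω ∂P = 0)
    (hX2 : Integrable (fun ω => X ω ^ 2) P) (hbd : ∀ᵐ ω ∂P, X ω ≤ b) :
    mgf X P l ≤ Real.exp ((Real.exp (b * l) - b * l - 1) / b ^ 2 * ∫ ω, X ω ^ 2 ∂P) := by
  set C := (Real.exp (b * l) - b * l - 1) / b ^ 2
  have hXint : Integrable X P :=
    ((memLp_two_iff_integrable_sq hX.aestronglyMeasurable).2 hX2).integrable one_le_two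
  have hlin : Integrable (fun ω => 1 + l * X ω) P := (integrable_const 1).add (hXint.const_mul l)
  have hquad : Integrable (fun ω => 1 + l * X ω + C * X ω ^ 2) P := hlin.add (hX2.const_mul C)
  calc mgf X P l ≤ ∫ ω, 1 + l * X ω + C * X ω ^ 2 ∂P :=
        integral_mono_of_nonneg (.of_forall fun ω => (Real.exp_pos _).le) hquad
          (hbd.mono fun ω hω => Real.exp_mul_le_one_add_add_sq hb hl hω)
    _ = C * ∫ ω, X ω ^ 2 ∂P + 1 := by
        rw [integral_add hlin (hX2.const_mul C), integral_add (integrable_const 1)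
          (hXint.const_mul l), integral_const_mul, integral_const_mul, hmean]
        simp [add_comm]
    _ ≤ Real.exp (C * ∫ ω, X ω ^ 2 ∂P) := Real.add_one_le_exp _

lemma integral_exp_sub_le_one_of_mgf_le {X : Ω → ℝ} {l c : ℝ} (h : mgf X P l ≤ Real.exp c) :
    ∫ ω, Real.exp (l * X ω - c) ∂P ≤ 1 := by
  calc ∫ ω, Real.exp (l * X ω - c) ∂P = mgf X P l * Real.exp (-c) := by
        simp only [mgf, sub_eq_add_neg, Real.exp_add, integral_mul_const]
    _ ≤ Real.exp c * Real.exp (-c) := by gcongr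
    _ = 1 := by rw [← Real.exp_add, add_neg_cancel, Real.exp_zero]

end

theorem bennett_lemma_general
    {Ω : Type*} [MeasurableSpace Ω] (P : Measure Ω) [IsProbabilityMeasure P]
    (n : ℕ) (Z : Fin n → Ω → ℝ) (hmeas : ∀ i, Measurable (Z i))
    (hindep : iIndepFun Z P)
    (b l : ℝ) (hb : 0 < b) (hl : 0 < l)
    (hmean : ∀ i, ∫ ω, Z i ω ∂P = 0)
    (h2 : ∀ i, Integrable (fun ω => (Z i ω) ^ 2) P)
    (hbd : ∀ i, ∀ᵐ ω ∂P, Z i ω ≤ b) :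
    ∫ ω, Real.exp (l * (∑ i, Z i ω)
        - (Real.exp (b * l) - b * l - 1) / b ^ 2 * ∑ i, ∫ ω', (Z i ω') ^ 2 ∂P) ∂P
      ≤ 1 := by
  have hmgf : mgf (∑ i, Z i) P l
      ≤ Real.exp ((Real.exp (b * l) - b * l - 1) / b ^ 2 * ∑ i, ∫ ω, Z i ω ^ 2 ∂P) := by
    rw [hindep.mgf_sum hmeas, Finset.mul_sum, Real.exp_sum]
    exact Finset.prod_le_prod (fun i _ => mgf_nonneg) fun i _ =>
      mgf_le_exp_mul_integral_sq hb hl (hmeas i).aemeasurable (hmean i) (h2 i) (hbd i)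
  simpa only [Finset.sum_apply] using integral_exp_sub_le_one_of_mgf_le hmgf

theorem bennett_lemma
    {Ω : Type*} [MeasurableSpace Ω] (P : Measure Ω) [IsProbabilityMeasure P]
    (n : ℕ) (Z : Fin n → Ω → ℝ) (hmeas : ∀ i, Measurable (Z i))
    (hindep : iIndepFun Z P)
    (hident : ∀ i j, IdentDistrib (Z i) (Z j) P P)
    (b l : ℝ) (hb : 0 < b) (hl : 0 < l)
    (hmean : ∀ i, ∫ ω, Z i ω ∂P = 0)
    (h2 : ∀ i, Integrable (fun ω => (Z i ω) ^ 2) P)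
    (hbd : ∀ i, ∀ᵐ ω ∂P, Z i ω ≤ b) :
    ∫ ω, Real.exp (l * (∑ i, Z i ω)
        - (Real.exp (b * l) - b * l - 1) / b ^ 2 * ∑ i, ∫ ω', (Z i ω') ^ 2 ∂P) ∂P
      ≤ 1 :=
  bennett_lemma_general P n Z hmeas hindep b l hb hl hmean h2 hbd
end

section
/- Let D be a distribution over X × Y and ρ a distribution over hypotheses. Then L(MV_ρ) ≤ 4 E_{h∼ρ,h'∼ρ}[L(h,h')], where L(h,h') is the expected tandem loss. -/
/-!
Let `Z(x, y)` be the `ρ`-mass of the hypotheses that err on `(x, y)`. Where the majority vote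
errs, the true label gets at most as much mass as the winning wrong label, and these two
disjoint groups carry mass at most one, so `Z ≥ 1/2` and hence `1 ≤ 4 Z²`. Integrating
(second-order Markov) gives `L(MV) ≤ 4 E_D[Z²]`, and expanding the square turns `E_D[Z²]`
into the `ρ ⊗ ρ`-average of the tandem losses.
-/

open MeasureTheory Finset

section WeightedVote

variable {H β : Type*} [Fintype H] [DecidableEq β] {ρ : H → ℝ}

theorem half_le_sum_weight_ne_of_vote_ne (hρ0 : ∀ h, 0 ≤ ρ h) (hρ1 : ∑ h, ρ h = 1)
    (v : H → β) {y m : β} (hmy : m ≠ y)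
    (hvote : ∑ h, ρ h * (if v h = y then (1 : ℝ) else 0)
      ≤ ∑ h, ρ h * (if v h = m then (1 : ℝ) else 0)) :
    1 / 2 ≤ ∑ h, ρ h * (if v h ≠ y then (1 : ℝ) else 0) := by
  have hdisjoint : ∑ h, ρ h * (if v h = y then (1 : ℝ) else 0)
      + ∑ h, ρ h * (if v h = m then (1 : ℝ) else 0) ≤ ∑ h, ρ h := by
    rw [← sum_add_distrib]
    refine sum_le_sum fun h _ => ?_
    by_cases hy : v h = y
    · simp [hy, hmy.symm]
    · by_cases hm : v h = m <;> simp [hy, hm, hmy, hρ0 h]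
  have hcompl : ∑ h, ρ h * (if v h ≠ y then (1 : ℝ) else 0)
      + ∑ h, ρ h * (if v h = y then (1 : ℝ) else 0) = ∑ h, ρ h := by
    rw [← sum_add_distrib]
    refine sum_congr rfl fun h _ => ?_
    by_cases hy : v h = y <;> simp [hy]
  linarith

end WeightedVote

theorem sq_sum_mul_eq_sum_sum {ι : Type*} (s : Finset ι) (w x : ι → ℝ) :
    (∑ i ∈ s, w i * x i) ^ 2 = ∑ i ∈ s, ∑ j ∈ s, w i * w j * (x i * x j) := by
  rw [sq, sum_mul_sum]
  exact sum_congr rfl fun i _ => sum_congr rfl fun j _ => by ring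

section SecondMoment

variable {α ι : Type*} [MeasurableSpace α] {μ : Measure α} (s : Finset ι) (w : ι → ℝ)
  {f : ι → α → ℝ}

theorem integrable_sq_sum_mul (hf : ∀ i j, Integrable (fun a => f i a * f j a) μ) :
    Integrable (fun a => (∑ i ∈ s, w i * f i a) ^ 2) μ := by
  simp_rw [sq_sum_mul_eq_sum_sum]
  exact integrable_finsetSum _ fun i _ =>
    integrable_finsetSum _ fun j _ => (hf i j).const_mul _

theorem integral_sq_sum_mul (hf : ∀ i j, Integrable (fun a => f i a * f j a) μ) :
    ∫ a, (∑ i ∈ s, w i * f i a) ^ 2 ∂μ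
      = ∑ i ∈ s, ∑ j ∈ s, w i * w j * ∫ a, f i a * f j a ∂μ := by
  simp_rw [sq_sum_mul_eq_sum_sum]
  rw [integral_finsetSum _ fun i _ =>
    integrable_finsetSum _ fun j _ => (hf i j).const_mul _]
  refine sum_congr rfl fun i _ => ?_
  rw [integral_finsetSum _ fun j _ => (hf i j).const_mul _]
  exact sum_congr rfl fun j _ => integral_const_mul _ _

end SecondMoment

theorem integrable_indicator_mul_indicator {α : Type*} [MeasurableSpace α] {μ : Measure α}
    [IsFiniteMeasure μ] {P Q : α → Prop} [DecidablePred P] [DecidablePred Q]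
    (hP : Measurable fun a => if P a then (1 : ℝ) else 0)
    (hQ : Measurable fun a => if Q a then (1 : ℝ) else 0) :
    Integrable (fun a => (if P a then (1 : ℝ) else 0) * (if Q a then (1 : ℝ) else 0)) μ :=
  .of_bound (hP.mul hQ).aestronglyMeasurable 1 <| ae_of_all _ fun a => by
    split_ifs <;> norm_num

theorem second_order_tandem_bound_general
    {𝒳 𝒴 : Type*} [MeasurableSpace 𝒳] [MeasurableSpace 𝒴] [DecidableEq 𝒴]
    (D : Measure (𝒳 × 𝒴)) [IsProbabilityMeasure D]
    {H : Type*} [Fintype H] (hyp : H → 𝒳 → 𝒴)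
    (hmeas : ∀ h : H,
      Measurable (fun p : 𝒳 × 𝒴 => if hyp h p.1 ≠ p.2 then (1 : ℝ) else 0))
    (ρ : H → ℝ) (hρ0 : ∀ h, 0 ≤ ρ h) (hρ1 : ∑ h, ρ h = 1)
    (MV : 𝒳 → 𝒴)
    (hMV : ∀ x y, (∑ h, ρ h * (if hyp h x = y then (1 : ℝ) else 0))
        ≤ ∑ h, ρ h * (if hyp h x = MV x then (1 : ℝ) else 0)) :
    ∫ p, (if MV p.1 ≠ p.2 then (1 : ℝ) else 0) ∂D
      ≤ 4 * (∑ h, ∑ h', ρ h * ρ h' *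
          ∫ p, (if hyp h p.1 ≠ p.2 then (1 : ℝ) else 0) *
               (if hyp h' p.1 ≠ p.2 then (1 : ℝ) else 0) ∂D) := by
  have htandem := fun h h' => integrable_indicator_mul_indicator (μ := D) (hmeas h) (hmeas h')
  have hpointwise : ∀ p : 𝒳 × 𝒴, (if MV p.1 ≠ p.2 then (1 : ℝ) else 0)
      ≤ 4 * (∑ h, ρ h * (if hyp h p.1 ≠ p.2 then (1 : ℝ) else 0)) ^ 2 := by
    intro p
    by_cases hMVp : MV p.1 = p.2
    · simp only [hMVp, ne_eq, not_true_eq_false, if_false]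
      positivity
    · have := half_le_sum_weight_ne_of_vote_ne hρ0 hρ1 (fun h => hyp h p.1) hMVp (hMV p.1 p.2)
      simp only [ne_eq, hMVp, not_false_eq_true, if_true]
      nlinarith
  calc ∫ p, (if MV p.1 ≠ p.2 then (1 : ℝ) else 0) ∂D
      ≤ ∫ p, 4 * (∑ h, ρ h * (if hyp h p.1 ≠ p.2 then (1 : ℝ) else 0)) ^ 2 ∂D :=
        integral_mono_of_nonneg (ae_of_all _ fun p => by positivity)
          ((integrable_sq_sum_mul _ ρ htandem).const_mul 4) (ae_of_all _ hpointwise)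
    _ = _ := by rw [integral_const_mul, integral_sq_sum_mul _ ρ htandem]

theorem second_order_tandem_bound
    {𝒳 𝒴 : Type*} [MeasurableSpace 𝒳] [MeasurableSpace 𝒴] [DecidableEq 𝒴]
    (D : Measure (𝒳 × 𝒴)) [IsProbabilityMeasure D]
    {H : Type*} [Fintype H] (hyp : H → 𝒳 → 𝒴)
    (hmeas : ∀ h : H,
      Measurable (fun p : 𝒳 × 𝒴 => if hyp h p.1 ≠ p.2 then (1 : ℝ) else 0))
    (ρ : H → ℝ) (hρ0 : ∀ h, 0 ≤ ρ h) (hρ1 : ∑ h, ρ h = 1)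
    (MV : 𝒳 → 𝒴)
    (hMVmeas : Measurable (fun p : 𝒳 × 𝒴 => if MV p.1 ≠ p.2 then (1 : ℝ) else 0))
    (hMV : ∀ x y, (∑ h, ρ h * (if hyp h x = y then (1 : ℝ) else 0))
        ≤ ∑ h, ρ h * (if hyp h x = MV x then (1 : ℝ) else 0)) :
    ∫ p, (if MV p.1 ≠ p.2 then (1 : ℝ) else 0) ∂D
      ≤ 4 * (∑ h, ∑ h', ρ h * ρ h' *
          ∫ p, (if hyp h p.1 ≠ p.2 then (1 : ℝ) else 0) *
               (if hyp h' p.1 ≠ p.2 then (1 : ℝ) else 0) ∂D) :=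
  second_order_tandem_bound_general D hyp hmeas ρ hρ0 hρ1 MV hMV
end

section
/- Let D be a distribution over X × Y, ρ a distribution over hypotheses, and μ < 1/2 a real number. Then L(MV_ρ) ≤ (E_{ρ²}[L(h,h')] − 2μ E_ρ[L(h)] + μ²) / (1/2 − μ)², where L(h) is the expected zero-one loss and L(h,h') the expected tandem loss. -/
/-!
If the majority vote errs, the hypotheses that err carry at least half of the weight `ρ`, so
`L(MV_ρ) ≤ P[Z ≥ 1/2]` for the Gibbs loss `Z = ∑ ρ h 1[h X ≠ Y]`. The parametric
Chebyshev–Cantelli inequality (Markov's inequality applied to `(Z - μ)²`) bounds this by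
`E[(Z - μ)²] / (1/2 - μ)²`, and expanding the square gives `E[Z] = E_ρ[L(h)]` and
`E[Z²] = E_{ρ²}[L(h, h')]`.
-/

open MeasureTheory

section

variable {Ω : Type*} [MeasurableSpace Ω] {P : Measure Ω}

theorem measureReal_ge_le_integral_sq_sub_div_sq [IsFiniteMeasure P] {Z : Ω → ℝ} {m ε : ℝ}
    (hZ : Integrable (fun ω => (Z ω - m) ^ 2) P) (hm : m < ε) :
    P.real {ω | ε ≤ Z ω} ≤ (∫ ω, (Z ω - m) ^ 2 ∂P) / (ε - m) ^ 2 := by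
  have hpos : 0 < (ε - m) ^ 2 := pow_pos (sub_pos.2 hm) 2
  have hsub : {ω | ε ≤ Z ω} ⊆ {ω | (ε - m) ^ 2 ≤ (Z ω - m) ^ 2} := fun ω hω =>
    pow_le_pow_left₀ (sub_pos.2 hm).le (sub_le_sub_right hω m) 2
  rw [le_div_iff₀' hpos]
  calc (ε - m) ^ 2 * P.real {ω | ε ≤ Z ω}
      ≤ (ε - m) ^ 2 * P.real {ω | (ε - m) ^ 2 ≤ (Z ω - m) ^ 2} :=
      mul_le_mul_of_nonneg_left (measureReal_mono hsub) hpos.le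
    _ ≤ ∫ ω, (Z ω - m) ^ 2 ∂P :=
      mul_meas_ge_le_integral_of_nonneg (.of_forall fun ω => sq_nonneg _) hZ _

theorem integral_sub_const_sq [IsProbabilityMeasure P] {Z : Ω → ℝ} (hZ : MemLp Z 2 P) (m : ℝ) :
    ∫ ω, (Z ω - m) ^ 2 ∂P = ∫ ω, Z ω ^ 2 ∂P - 2 * m * ∫ ω, Z ω ∂P + m ^ 2 := by
  have hZ1 : Integrable Z P := hZ.integrable one_le_two
  have hexp : (fun ω => (Z ω - m) ^ 2) = fun ω => Z ω ^ 2 - 2 * m * Z ω + m ^ 2 :=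
    funext fun ω => by ring
  rw [hexp, integral_add (f := fun ω => Z ω ^ 2 - 2 * m * Z ω)
      (hZ.integrable_sq.sub (hZ1.const_mul _)) (integrable_const _),
    integral_sub hZ.integrable_sq (hZ1.const_mul _), integral_const_mul, integral_const]
  simp [mul_assoc]

theorem integral_le_measureReal_of_le_indicator_one [IsFiniteMeasure P] {g : Ω → ℝ} {s : Set Ω}
    (hs : MeasurableSet s) (hg0 : ∀ ω, 0 ≤ g ω) (hg : ∀ ω, g ω ≤ s.indicator 1 ω) :
    ∫ ω, g ω ∂P ≤ P.real s := by
  rw [← integral_indicator_one hs]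
  exact integral_mono_of_nonneg (.of_forall hg0) ((integrable_const 1).indicator hs) (.of_forall hg)

variable {ι : Type*} {F : ι → Ω → ℝ}

theorem integral_sum_mul (s : Finset ι) (w : ι → ℝ) (hF : ∀ i ∈ s, Integrable (F i) P) :
    ∫ ω, ∑ i ∈ s, w i * F i ω ∂P = ∑ i ∈ s, w i * ∫ ω, F i ω ∂P := by
  rw [integral_finsetSum s fun i hi => (hF i hi).const_mul (w i)]
  simp_rw [integral_const_mul]

theorem integral_sq_sum_mul_s9 (s : Finset ι) (w : ι → ℝ) (hF : ∀ i ∈ s, MemLp (F i) 2 P) :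
    ∫ ω, (∑ i ∈ s, w i * F i ω) ^ 2 ∂P
      = ∑ i ∈ s, ∑ j ∈ s, w i * w j * ∫ ω, F i ω * F j ω ∂P := by
  have hprod : ∀ i ∈ s, ∀ j ∈ s, Integrable (fun ω => F i ω * F j ω) P :=
    fun i hi j hj => (hF i hi).integrable_mul (hF j hj)
  have hexp : (fun ω => (∑ i ∈ s, w i * F i ω) ^ 2)
      = fun ω => ∑ i ∈ s, ∑ j ∈ s, w i * w j * (F i ω * F j ω) := funext fun ω => by
    rw [sq, Finset.sum_mul_sum]
    exact Finset.sum_congr rfl fun i _ => Finset.sum_congr rfl fun j _ => by ring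
  rw [hexp, integral_finsetSum s fun i hi =>
    integrable_finsetSum s fun j hj => (hprod i hi j hj).const_mul _]
  refine Finset.sum_congr rfl fun i hi => ?_
  exact integral_sum_mul s (fun j => w i * w j) (hprod i hi)

end

theorem half_le_sum_weight_ne_of_majority {H β : Type*} [Fintype H] [DecidableEq β] (ρ : H → ℝ)
    (hρ0 : ∀ h, 0 ≤ ρ h) (hρ1 : ∑ h, ρ h = 1) (v : H → β) {y y' : β} (hne : y' ≠ y)
    (hmaj : ∑ h, ρ h * (if v h = y then (1 : ℝ) else 0)
      ≤ ∑ h, ρ h * (if v h = y' then (1 : ℝ) else 0)) :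
    1 / 2 ≤ ∑ h, ρ h * (if v h ≠ y then (1 : ℝ) else 0) := by
  have hvote : ∑ h, ρ h * (if v h = y' then (1 : ℝ) else 0)
      ≤ ∑ h, ρ h * (if v h ≠ y then (1 : ℝ) else 0) := by
    refine Finset.sum_le_sum fun h _ => mul_le_mul_of_nonneg_left ?_ (hρ0 h)
    split_ifs <;> simp_all
  have htotal : ∑ h, ρ h * (if v h = y then (1 : ℝ) else 0)
      + ∑ h, ρ h * (if v h ≠ y then (1 : ℝ) else 0) = 1 := by
    rw [← Finset.sum_add_distrib, ← hρ1]
    refine Finset.sum_congr rfl fun h _ => ?_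
    split_ifs <;> simp_all
  linarith

theorem parametric_CC_majority_vote_bound_general
    {𝒳 𝒴 : Type*} [MeasurableSpace 𝒳] [MeasurableSpace 𝒴] [DecidableEq 𝒴]
    (D : Measure (𝒳 × 𝒴)) [IsProbabilityMeasure D]
    {H : Type*} [Fintype H] (hyp : H → 𝒳 → 𝒴)
    (hmeas : ∀ h : H,
      Measurable (fun p : 𝒳 × 𝒴 => if hyp h p.1 ≠ p.2 then (1 : ℝ) else 0))
    (ρ : H → ℝ) (hρ0 : ∀ h, 0 ≤ ρ h) (hρ1 : ∑ h, ρ h = 1)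
    (μ : ℝ) (hμ : μ < 1/2)
    (MV : 𝒳 → 𝒴)
    (hMV : ∀ x y, (∑ h, ρ h * (if hyp h x = y then (1 : ℝ) else 0))
        ≤ ∑ h, ρ h * (if hyp h x = MV x then (1 : ℝ) else 0)) :
    ∫ p, (if MV p.1 ≠ p.2 then (1 : ℝ) else 0) ∂D
      ≤ ((∑ h, ∑ h', ρ h * ρ h' *
          ∫ p, (if hyp h p.1 ≠ p.2 then (1 : ℝ) else 0) *
               (if hyp h' p.1 ≠ p.2 then (1 : ℝ) else 0) ∂D)
          - 2 * μ * (∑ h, ρ h * ∫ p, (if hyp h p.1 ≠ p.2 then (1 : ℝ) else 0) ∂D) + μ ^ 2) / (1/2 - μ) ^ 2 := by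
  have hloss : ∀ h, MemLp (fun p : 𝒳 × 𝒴 => if hyp h p.1 ≠ p.2 then (1 : ℝ) else 0) 2 D :=
    fun h => .of_bound (hmeas h).aestronglyMeasurable 1 (.of_forall fun p => by split_ifs <;> simp)
  set Z : 𝒳 × 𝒴 → ℝ := fun p => ∑ h, ρ h * (if hyp h p.1 ≠ p.2 then (1 : ℝ) else 0)
  have hZ : MemLp Z 2 D := memLp_finsetSum _ fun h _ => (hloss h).const_mul (ρ h)
  have hZmeas : Measurable Z := Finset.measurable_sum _ fun h _ => (hmeas h).const_mul (ρ h)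
  have hMV_err : ∀ p, (if MV p.1 ≠ p.2 then (1 : ℝ) else 0) ≤ {p | 1/2 ≤ Z p}.indicator 1 p := by
    intro p
    by_cases hp : MV p.1 = p.2
    · simp [hp, Set.indicator_nonneg]
    · have hZp : p ∈ {p | 1/2 ≤ Z p} :=
        half_le_sum_weight_ne_of_majority ρ hρ0 hρ1 (hyp · p.1) hp (hMV p.1 p.2)
      rw [if_pos hp, Set.indicator_of_mem hZp, Pi.one_apply]
  calc ∫ p, (if MV p.1 ≠ p.2 then (1 : ℝ) else 0) ∂D
      ≤ D.real {p | 1/2 ≤ Z p} :=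
        integral_le_measureReal_of_le_indicator_one (measurableSet_le measurable_const hZmeas)
          (fun p => by split_ifs <;> norm_num) hMV_err
    _ ≤ (∫ p, (Z p - μ) ^ 2 ∂D) / (1/2 - μ) ^ 2 :=
        measureReal_ge_le_integral_sq_sub_div_sq (hZ.sub (memLp_const μ)).integrable_sq hμ
    _ = _ := by
        rw [integral_sub_const_sq hZ, integral_sq_sum_mul_s9 _ _ fun h _ => hloss h,
          integral_sum_mul _ _ fun h _ => (hloss h).integrable one_le_two]

theorem parametric_CC_majority_vote_bound
    {𝒳 𝒴 : Type*} [MeasurableSpace 𝒳] [MeasurableSpace 𝒴] [DecidableEq 𝒴]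
    (D : Measure (𝒳 × 𝒴)) [IsProbabilityMeasure D]
    {H : Type*} [Fintype H] (hyp : H → 𝒳 → 𝒴)
    (hmeas : ∀ h : H,
      Measurable (fun p : 𝒳 × 𝒴 => if hyp h p.1 ≠ p.2 then (1 : ℝ) else 0))
    (ρ : H → ℝ) (hρ0 : ∀ h, 0 ≤ ρ h) (hρ1 : ∑ h, ρ h = 1)
    (μ : ℝ) (hμ : μ < 1/2)
    (MV : 𝒳 → 𝒴)
    (hMVmeas : Measurable (fun p : 𝒳 × 𝒴 => if MV p.1 ≠ p.2 then (1 : ℝ) else 0))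
    (hMV : ∀ x y, (∑ h, ρ h * (if hyp h x = y then (1 : ℝ) else 0))
        ≤ ∑ h, ρ h * (if hyp h x = MV x then (1 : ℝ) else 0)) :
    ∫ p, (if MV p.1 ≠ p.2 then (1 : ℝ) else 0) ∂D
      ≤ ((∑ h, ∑ h', ρ h * ρ h' *
          ∫ p, (if hyp h p.1 ≠ p.2 then (1 : ℝ) else 0) *
               (if hyp h' p.1 ≠ p.2 then (1 : ℝ) else 0) ∂D)
          - 2 * μ * (∑ h, ρ h * ∫ p, (if hyp h p.1 ≠ p.2 then (1 : ℝ) else 0) ∂D) + μ ^ 2) / (1/2 - μ) ^ 2 :=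
  parametric_CC_majority_vote_bound_general D hyp hmeas ρ hρ0 hρ1 μ hμ MV hMV
end

section
/- Suppose E_ρ[L(h)] < 1/2 and E_{ρ²}[L(h,h')] > (1/2) E_ρ[L(h)], with E_{ρ²}[L(h,h')] ≥ E_ρ[L(h)]². Then 2 E_ρ[L(h)] < (E_{ρ²}[L(h,h')] − E_ρ[L(h)]²)/(1/4 + E_{ρ²}[L(h,h')] − E_ρ[L(h)]); conversely, if E_{ρ²}[L(h,h')] < (1/2) E_ρ[L(h)], the reverse strict inequality holds. -/
/-! Clearing the positive denominator `1/4 + T - G ≥ (1/2 - G)²`, the comparison of `2G` with the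
C-bound becomes the sign of `(T - G²) - 2G (1/4 + T - G) = (1 - 2G) (T - G/2)`, and `1 - 2G > 0`. -/

section CBound

variable {G T : ℝ}

lemma cBound_denom_pos (hG : G ≠ 1/2) (hTG : G ^ 2 ≤ T) : 0 < 1/4 + T - G := by
  have hsq : 0 < (1/2 - G) ^ 2 := sq_pos_of_ne_zero (sub_ne_zero.mpr hG.symm)
  nlinarith

lemma cBound_numer_sub_two_mul_denom (G T : ℝ) :
    (T - G ^ 2) - 2 * G * (1/4 + T - G) = (1 - 2 * G) * (T - 1/2 * G) := by
  ring

lemma two_mul_lt_cBound_iff (hG : G < 1/2) (hTG : G ^ 2 ≤ T) :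
    2 * G < (T - G ^ 2) / (1/4 + T - G) ↔ 1/2 * G < T := by
  rw [lt_div_iff₀ (cBound_denom_pos hG.ne hTG), ← sub_pos, cBound_numer_sub_two_mul_denom,
    mul_pos_iff_of_pos_left (by linarith), sub_pos]

lemma cBound_lt_two_mul_iff (hG : G < 1/2) (hTG : G ^ 2 ≤ T) :
    (T - G ^ 2) / (1/4 + T - G) < 2 * G ↔ T < 1/2 * G := by
  rw [div_lt_iff₀ (cBound_denom_pos hG.ne hTG), ← sub_pos, ← neg_sub, cBound_numer_sub_two_mul_denom,
    ← mul_neg, neg_sub, mul_pos_iff_of_pos_left (by linarith), sub_pos]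

end CBound

theorem first_vs_second_order_oracle_comparison_general
    (G T : ℝ) (hG : G < 1/2) (hTG : G ^ 2 ≤ T) :
    (T > (1/2) * G →
      2 * G < (T - G ^ 2) / (1/4 + T - G)) ∧
    (T < (1/2) * G →
      (T - G ^ 2) / (1/4 + T - G) < 2 * G) :=
  ⟨(two_mul_lt_cBound_iff hG hTG).mpr, (cBound_lt_two_mul_iff hG hTG).mpr⟩

theorem first_vs_second_order_oracle_comparison
    (G T : ℝ) (hG0 : 0 ≤ G) (hG : G < 1/2) (hTG : G ^ 2 ≤ T) :
    (T > (1/2) * G →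
      2 * G < (T - G ^ 2) / (1/4 + T - G)) ∧
    (T < (1/2) * G →
      (T - G ^ 2) / (1/4 + T - G) < 2 * G) :=
  first_vs_second_order_oracle_comparison_general G T hG hTG
end

section
/- Let G and T be real numbers with G² ≤ T ≤ G and 0 ≤ G < 1/2, and suppose T ≠ G/2. Let μ* = G − (T − G²)/(1/2 − G). Then (T − 2μ*G + (μ*)²)/(1/2 − μ*)² < 4T, i.e., the parametric Chebyshev-Cantelli bound at the optimal offset μ* is strictly smaller than the second order Markov bound; equality holds if and only if T = G/2 (in which case μ* = 0). -/
/-!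
Write `a = 1/2 - G` and `v = T - G²`, so that `T - G + 1/4 = a² + v`. At the optimal offset
`μ* = G - v/a` one has `1/2 - μ* = (a² + v)/a` and `T - 2μ*G + μ*² = v + (v/a)²`, so the
parametric Chebyshev–Cantelli bound collapses to `v/(a² + v)`. Its gap to the second order Markov
bound is the perfect square `4T - v/(a² + v) = (2T - G)²/(a² + v)`, which vanishes exactly when
`T = G/2`.
-/

namespace ChebyshevCantelli

/-- The parametric Chebyshev–Cantelli bound at threshold `1/2` and offset `μ`, where `G` and `T`
are the first and second moments of the Gibbs risk. -/
noncomputable def bound (G T μ : ℝ) : ℝ :=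
  (T - 2 * μ * G + μ ^ 2) / (1/2 - μ) ^ 2

noncomputable def optimalOffset (G T : ℝ) : ℝ :=
  G - (T - G ^ 2) / (1/2 - G)

variable {G T : ℝ}

lemma bound_optimalOffset (hG : G ≠ 1/2) (hD : T - G + 1/4 ≠ 0) :
    bound G T (optimalOffset G T) = (T - G ^ 2) / (T - G + 1/4) := by
  have ha : 1/2 - G ≠ 0 := sub_ne_zero.mpr hG.symm
  have hD_eq : T - G + 1/4 = (1/2 - G) ^ 2 + (T - G ^ 2) := by ring
  have half_sub : 1/2 - optimalOffset G T = ((1/2 - G) ^ 2 + (T - G ^ 2)) / (1/2 - G) := by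
    rw [optimalOffset, eq_div_iff ha, sub_mul, sub_mul, div_mul_cancel₀ _ ha]
    ring
  have numerator : T - 2 * optimalOffset G T * G + optimalOffset G T ^ 2
      = (T - G ^ 2) + ((T - G ^ 2) / (1/2 - G)) ^ 2 := by
    rw [optimalOffset]
    ring
  rw [bound, half_sub, numerator, hD_eq]
  rw [hD_eq] at hD
  generalize 1/2 - G = a at *
  generalize T - G ^ 2 = v at *
  field_simp

lemma four_mul_sub_bound_optimalOffset (hG : G ≠ 1/2) (hD : T - G + 1/4 ≠ 0) :
    4 * T - bound G T (optimalOffset G T) = (2 * T - G) ^ 2 / (T - G + 1/4) := by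
  rw [bound_optimalOffset hG hD, eq_div_iff hD, sub_mul, div_mul_cancel₀ _ hD]
  ring

lemma optimalOffset_eq_zero (hG : G ≠ 1/2) (hT : T = 1/2 * G) : optimalOffset G T = 0 := by
  have ha : 1/2 - G ≠ 0 := sub_ne_zero.mpr hG.symm
  rw [optimalOffset, hT, sub_eq_zero, eq_div_iff ha]
  ring

end ChebyshevCantelli

open ChebyshevCantelli in
theorem parametric_CC_vs_second_order_markov_general
    (G T : ℝ) (hG : G < 1/2) (hT1 : G ^ 2 ≤ T) :
    (T ≠ (1/2) * G →
      (T - 2 * (G - (T - G ^ 2) / (1/2 - G)) * G + (G - (T - G ^ 2) / (1/2 - G)) ^ 2)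
          / (1/2 - (G - (T - G ^ 2) / (1/2 - G))) ^ 2 < 4 * T) ∧
    ((T - 2 * (G - (T - G ^ 2) / (1/2 - G)) * G + (G - (T - G ^ 2) / (1/2 - G)) ^ 2)
          / (1/2 - (G - (T - G ^ 2) / (1/2 - G))) ^ 2 = 4 * T ↔ T = (1/2) * G) ∧
    (T = (1/2) * G → G - (T - G ^ 2) / (1/2 - G) = 0) := by
  change (T ≠ 1/2 * G → bound G T (optimalOffset G T) < 4 * T) ∧
    (bound G T (optimalOffset G T) = 4 * T ↔ T = 1/2 * G) ∧
    (T = 1/2 * G → optimalOffset G T = 0)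
  have hD : 0 < T - G + 1/4 := by nlinarith [sq_nonneg (G - 1/2)]
  have gap := four_mul_sub_bound_optimalOffset hG.ne hD.ne'
  have gap_nonneg : 0 ≤ 4 * T - bound G T (optimalOffset G T) := by
    rw [gap]
    exact div_nonneg (sq_nonneg _) hD.le
  have gap_eq_zero : 4 * T - bound G T (optimalOffset G T) = 0 ↔ T = 1/2 * G := by
    rw [gap, div_eq_zero_iff, or_iff_left hD.ne', sq_eq_zero_iff]
    constructor <;> intro h <;> linarith
  refine ⟨fun hne => ?_, ?_, optimalOffset_eq_zero hG.ne⟩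
  · exact sub_pos.mp (gap_nonneg.lt_of_ne fun h => hne (gap_eq_zero.mp h.symm))
  · rw [← gap_eq_zero, sub_eq_zero, eq_comm]

theorem parametric_CC_vs_second_order_markov
    (G T : ℝ) (hG0 : 0 ≤ G) (hG : G < 1/2) (hT1 : G ^ 2 ≤ T) (hT2 : T ≤ G) :
    (T ≠ (1/2) * G →
      (T - 2 * (G - (T - G ^ 2) / (1/2 - G)) * G + (G - (T - G ^ 2) / (1/2 - G)) ^ 2)
          / (1/2 - (G - (T - G ^ 2) / (1/2 - G))) ^ 2 < 4 * T) ∧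
    ((T - 2 * (G - (T - G ^ 2) / (1/2 - G)) * G + (G - (T - G ^ 2) / (1/2 - G)) ^ 2)
          / (1/2 - (G - (T - G ^ 2) / (1/2 - G))) ^ 2 = 4 * T ↔ T = (1/2) * G) ∧
    (T = (1/2) * G → G - (T - G ^ 2) / (1/2 - G) = 0) :=
  parametric_CC_vs_second_order_markov_general G T hG hT1
end

section
/- The function γ ↦ φ(γb)/(γ²b²) with φ(x) = e^x − x − 1 and b > 0 is strictly increasing in γ > 0, satisfies lim_{γ→0⁺} φ(γb)/(γ²b²) = 1/2, and equals e − 2 at γ = 1/b. Consequently, for all γ ∈ (0, 1/b], φ(γb)/(γb²) ≤ (e−2)γ, i.e., the PAC-Bayes-Bennett variance coefficient is at most the PAC-Bayes-Bernstein coefficient. -/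
/-!
Write `g x = (eˣ - x - 1) / x²`, so that the coefficient is `g (γ b)`. Its derivative is
`((x - 2) eˣ + x + 2) / x³`; the numerator vanishes at `0` and has derivative `(x - 1) eˣ + 1`,
which is positive because `e⁻ˣ > 1 - x`. Hence `g` is strictly increasing on `(0, ∞)`. The limit
`1/2` follows from the cubic remainder bound for the exponential series, and the comparison with
`(e - 2) γ` is `g (γ b) ≤ g 1` multiplied by `γ`.
-/

open Real Filter Set Topology

namespace Real

lemma one_sub_mul_exp_lt_one {x : ℝ} (hx : x ≠ 0) : (1 - x) * exp x < 1 := by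
  calc (1 - x) * exp x < exp (-x) * exp x := by
        gcongr; linarith [add_one_lt_exp (neg_ne_zero.mpr hx)]
    _ = 1 := by rw [← exp_add, neg_add_cancel, exp_zero]

lemma sub_two_mul_exp_add_add_two_pos {x : ℝ} (hx : 0 < x) : 0 < (x - 2) * exp x + x + 2 := by
  have hmono : StrictMonoOn (fun x ↦ (x - 2) * exp x + x + 2) (Ici 0) := by
    refine strictMonoOn_of_deriv_pos (convex_Ici 0) (by fun_prop) fun y hy ↦ ?_
    rw [interior_Ici] at hy
    have hderiv : HasDerivAt (fun x ↦ (x - 2) * exp x + x + 2) ((y - 1) * exp y + 1) y := by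
      refine (((((hasDerivAt_id' y).sub_const 2).mul (hasDerivAt_exp y)).add
        (hasDerivAt_id' y)).add_const 2).congr_deriv ?_
      ring
    rw [hderiv.deriv]
    linarith [one_sub_mul_exp_lt_one hy.ne']
  simpa using hmono self_mem_Ici hx.le hx

lemma strictMonoOn_exp_sub_sub_one_div_sq :
    StrictMonoOn (fun x ↦ (exp x - x - 1) / x ^ 2) (Ioi 0) := by
  refine strictMonoOn_of_deriv_pos (convex_Ioi 0)
    (ContinuousOn.div (by fun_prop) (by fun_prop) fun x hx ↦ pow_ne_zero 2 (ne_of_gt hx))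
    fun x hx ↦ ?_
  rw [interior_Ioi, mem_Ioi] at hx
  have hderiv : HasDerivAt (fun x ↦ (exp x - x - 1) / x ^ 2)
      (((x - 2) * exp x + x + 2) / x ^ 3) x := by
    refine ((((hasDerivAt_exp x).sub (hasDerivAt_id' x)).sub_const 1).div
      (hasDerivAt_pow 2 x) (pow_ne_zero 2 hx.ne')).congr_deriv ?_
    simp only [Pi.sub_apply]
    field_simp [hx.ne']
    ring
  rw [hderiv.deriv]
  exact div_pos (sub_two_mul_exp_add_add_two_pos hx) (pow_pos hx 3)

lemma abs_exp_sub_quadratic_le {x : ℝ} (hx : |x| ≤ 1) :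
    |exp x - (1 + x + x ^ 2 / 2)| ≤ 2 / 9 * |x| ^ 3 := by
  have h := exp_bound hx (n := 3) (by norm_num)
  norm_num [Finset.sum_range_succ, Nat.factorial] at h
  linarith

lemma tendsto_exp_sub_sub_one_div_sq :
    Tendsto (fun x ↦ (exp x - x - 1) / x ^ 2) (𝓝[≠] 0) (𝓝 (1 / 2)) := by
  rw [tendsto_iff_norm_sub_tendsto_zero]
  refine squeeze_zero_norm' (a := fun x ↦ 2 / 9 * |x|) ?_ (tendsto_nhdsWithin_of_tendsto_nhds
    ((continuous_const.mul continuous_abs).tendsto' 0 0 (by simp)))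
  filter_upwards [nhdsWithin_le_nhds (Icc_mem_nhds (neg_one_lt_zero : (-1 : ℝ) < 0) one_pos),
    self_mem_nhdsWithin] with x hx (hx0 : x ≠ 0)
  have hremainder : (exp x - x - 1) / x ^ 2 - 1 / 2 = (exp x - (1 + x + x ^ 2 / 2)) / x ^ 2 := by
    field_simp
    ring
  calc ‖‖(exp x - x - 1) / x ^ 2 - 1 / 2‖‖ = |exp x - (1 + x + x ^ 2 / 2)| / |x| ^ 2 := by
        rw [norm_norm, Real.norm_eq_abs, hremainder, abs_div, abs_pow]
    _ ≤ 2 / 9 * |x| ^ 3 / |x| ^ 2 := by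
        gcongr; exact abs_exp_sub_quadratic_le (abs_le.mpr hx)
    _ = 2 / 9 * |x| := by
        field_simp [abs_pos.mpr hx0]

end Real

theorem bennett_coefficient_properties (b : ℝ) (hb : 0 < b) :
    StrictMonoOn (fun γ : ℝ => (Real.exp (γ * b) - γ * b - 1) / (γ ^ 2 * b ^ 2))
      (Set.Ioi (0 : ℝ)) ∧
    Filter.Tendsto (fun γ : ℝ => (Real.exp (γ * b) - γ * b - 1) / (γ ^ 2 * b ^ 2))
      (nhdsWithin 0 (Set.Ioi (0 : ℝ))) (nhds (1/2)) ∧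
    (Real.exp ((1/b) * b) - (1/b) * b - 1) / ((1/b) ^ 2 * b ^ 2) = Real.exp 1 - 2 ∧
    ∀ γ : ℝ, γ ∈ Set.Ioc (0 : ℝ) (1/b) →
      (Real.exp (γ * b) - γ * b - 1) / (γ * b ^ 2) ≤ (Real.exp 1 - 2) * γ := by
  have hcomp : (fun γ : ℝ ↦ (exp (γ * b) - γ * b - 1) / (γ ^ 2 * b ^ 2)) =
      (fun x ↦ (exp x - x - 1) / x ^ 2) ∘ (· * b) := by
    funext γ; simp only [Function.comp_apply, mul_pow]
  have hmono : StrictMonoOn (fun γ : ℝ ↦ (exp (γ * b) - γ * b - 1) / (γ ^ 2 * b ^ 2)) (Ioi 0) :=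
    hcomp ▸ strictMonoOn_exp_sub_sub_one_div_sq.comp
      ((strictMono_mul_right_of_pos hb).strictMonoOn _) fun γ hγ ↦ mul_pos hγ hb
  have hval : (exp ((1 / b) * b) - (1 / b) * b - 1) / ((1 / b) ^ 2 * b ^ 2) = exp 1 - 2 := by
    field_simp
    ring
  refine ⟨hmono, ?_, hval, fun γ ⟨hγ, hγb⟩ ↦ ?_⟩
  · have hscale : Tendsto (· * b) (𝓝[>] 0) (𝓝[≠] 0) :=
      tendsto_nhdsWithin_of_tendsto_nhds_of_eventually_within _
        (((continuous_mul_const b).tendsto' 0 0 (zero_mul b)).mono_left nhdsWithin_le_nhds)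
        (eventually_nhdsWithin_of_forall fun γ hγ ↦ (mul_pos hγ hb).ne')
    rw [hcomp]
    exact tendsto_exp_sub_sub_one_div_sq.comp hscale
  · have hle := hmono.monotoneOn hγ (one_div_pos.mpr hb) hγb
    rw [hval] at hle
    calc (exp (γ * b) - γ * b - 1) / (γ * b ^ 2)
        = γ * ((exp (γ * b) - γ * b - 1) / (γ ^ 2 * b ^ 2)) := by field_simp
      _ ≤ γ * (exp 1 - 2) := by gcongr
      _ = (exp 1 - 2) * γ := mul_comm _ _
end
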